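/- In an upwards complete ordered set L, every noncompact element a lies below a maximal noncompact element: there exists m ≥ a such that m is not compact and every x > m is compact. -/

import Mathlib

universe u

/-- A subset is directed if every finite subset has an upper bound in it. -/
def IsDirectedSet {α : Type u} [PartialOrder α] (X : Set α) : Prop :=
  ∀ F : Finset α, ↑F ⊆ X → ∃ z ∈ X, ∀ x ∈ F, x ≤ z

/-- An element is compact if whenever it is below the supremum of a directed set,
it is below some member of the set. -/
def IsCompactElem {α : Type u} [PartialOrder α] (k : α) : Prop :=
  ∀ X : Set α, IsDirectedSet X → ∀ s : α, IsLUB X s → k ≤ s → ∃ x ∈ X, k ≤ x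

/-- An ordered set is upwards complete if every directed subset has a supremum. -/
def UpwardsComplete (α : Type u) [PartialOrder α] : Prop :=
  ∀ X : Set α, IsDirectedSet X → ∃ s : α, IsLUB X s

/-- An ordered set is algebraic if it is upwards complete and every element is the
supremum of the directed set of compact elements below it. -/
def IsAlgebraicOrder (α : Type u) [PartialOrder α] : Prop :=
  UpwardsComplete α ∧ ∀ x : α,
    IsDirectedSet {k : α | IsCompactElem k ∧ k ≤ x} ∧
    IsLUB {k : α | IsCompactElem k ∧ k ≤ x} x

/-- The iterated poset of compact elements: `KIter α inst n` is `Kⁿ(α)` with its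
induced partial order. -/
def KIter (α : Type u) (inst : PartialOrder α) : ℕ → (β : Type u) × PartialOrder β
  | 0 => ⟨α, inst⟩
  | n + 1 =>
    let p := KIter α inst n
    ⟨{x : p.1 // @IsCompactElem p.1 p.2 x}, @Subtype.partialOrder p.1 p.2 _⟩

/-- An ordered set is iteratively algebraic if `Kⁿ(α)` is algebraic for all `n`. -/
def IterativelyAlgebraic (α : Type u) (inst : PartialOrder α) : Prop :=
  ∀ n : ℕ, @IsAlgebraicOrder (KIter α inst n).1 (KIter α inst n).2

/-! A compact element that is the supremum of a directed set is attained in that set, so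
suprema of chains of noncompact elements are noncompact and Zorn's lemma applies to the
noncompact elements. -/

theorem DirectedOn.isDirectedSet {α : Type u} [PartialOrder α] {X : Set α}
    (hX : DirectedOn (· ≤ ·) X) (hne : X.Nonempty) : IsDirectedSet X := by
  classical
  intro F hF
  have : Nonempty X := hne.to_subtype
  obtain ⟨z, hz⟩ := (directedOn_iff_directed.mp hX).finset_le (F.subtype (· ∈ X))
  exact ⟨z, z.2, fun x hx => hz ⟨x, hF hx⟩ (Finset.mem_subtype.mpr hx)⟩

theorem IsCompactElem.mem_of_isLUB {α : Type u} [PartialOrder α] {X : Set α} {s : α}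
    (hs : IsCompactElem s) (hX : IsDirectedSet X) (hsX : IsLUB X s) : s ∈ X := by
  obtain ⟨x, hx, hsx⟩ := hs X hX s hsX le_rfl
  rwa [le_antisymm (hsX.1 hx) hsx] at hx

/-- In an upwards complete ordered set, every noncompact element lies below a
maximal noncompact element. -/
theorem exists_maximal_noncompact_above {α : Type u} [PartialOrder α]
    (hL : UpwardsComplete α) (a : α) (ha : ¬ IsCompactElem a) :
    ∃ m : α, a ≤ m ∧ ¬ IsCompactElem m ∧ ∀ x : α, m < x → IsCompactElem x := by
  obtain ⟨m, ham, hm⟩ := zorn_le_nonempty₀ {x : α | ¬ IsCompactElem x}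
    (fun c hc hchain y hy => by
      have hdir : IsDirectedSet c := hchain.directedOn.isDirectedSet ⟨y, hy⟩
      obtain ⟨s, hs⟩ := hL c hdir
      exact ⟨s, fun hcomp => hc (hcomp.mem_of_isLUB hdir hs) hcomp, hs.1⟩)
    a ha
  exact ⟨m, ham, hm.prop, fun x hmx => not_not.mp (hm.not_prop_of_gt hmx)⟩
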